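/- arXiv:1502.07286 — 2 statements merged into one kernel-verified Lean document; each statement's English description precedes it below -/
import Mathlib

section
/- For every ζ ∈ ℂ with Re ζ > 0 and all x ≠ y in ℝ^d, the gradient of the Laplacian resolvent kernel satisfies |∇_x (ζ-Δ)^(-1)(x,y)| ≤ m_d · (κ_d^(-1)·Re ζ - Δ)^(-1/2)(x,y), where m_d = (π/(2e))^(1/2) d^(d/2) (d-1)^((1-d)/2) and κ_d = d/(d-1). -/
/-!
Differentiating the heat kernel `p_t` gives `|∇ₓ p_t(x - y)| = r/(2t) · p_t(x - y)` with `r = |x - y|`.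
For `κ > 1` the maximum of `√a e^{-(κ-1)a}` is `(2e(κ-1))^{-1/2}`, so with `a = r²/(4s)`
`r/(2s) e^{-κa} ≤ (2e(κ-1))^{-1/2} s^{-1/2} e^{-a}`: the factor `r/(2t)` is traded for `t^{-1/2}`
at the price of slowing the heat flow by `κ`. Substituting `t = s/κ` in the time integral gives
`r ∫ e^{-λt} p_t/(2t) dt ≤ κ^{d/2}(2e(κ-1))^{-1/2} ∫ e^{-λs/κ} s^{-1/2} p_s ds`, which is the bound
by the kernel of `(λ/κ - Δ)^{-1/2}`; the choice `κ = d/(d-1)` gives the constant `m_d`.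
-/

noncomputable section
open Real Set MeasureTheory

/-- The kernel of `(ζ-Δ)^(-γ/2)` on `ℝ^d`:
`(λ-Δ)^(-γ/2)(x,y) = (1/Γ(γ/2)) ∫₀^∞ e^(-ζ t) t^(γ/2-1) (4πt)^(-d/2) e^(-|x-y|²/(4t)) dt`. -/
def cKer (d : ℕ) (γ : ℝ) (ζ : ℂ) (x y : EuclideanSpace ℝ (Fin d)) : ℂ :=
  (Real.Gamma (γ/2))⁻¹ •
    ∫ t in Ioi (0:ℝ), Complex.exp (-ζ * t) *
      ((t ^ (γ/2 - 1) * (4 * π * t) ^ (-(d:ℝ)/2) *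
        Real.exp (-(dist x y) ^ 2 / (4 * t)) : ℝ) : ℂ)

/-- The same kernel for real `λ`, real-valued. -/
def rKer (d : ℕ) (γ : ℝ) (lam : ℝ) (x y : EuclideanSpace ℝ (Fin d)) : ℝ :=
  (Real.Gamma (γ/2))⁻¹ *
    ∫ t in Ioi (0:ℝ), Real.exp (-lam * t) * t ^ (γ/2 - 1) * (4 * π * t) ^ (-(d:ℝ)/2) *
      Real.exp (-(dist x y) ^ 2 / (4 * t))

/-- The `i`-th component of the gradient `∇ₓ (ζ-Δ)^(-γ/2)(x,y)`, obtained by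
differentiating the heat-kernel representation under the integral sign. -/
def gradKer (d : ℕ) (γ : ℝ) (ζ : ℂ) (x y : EuclideanSpace ℝ (Fin d)) (i : Fin d) : ℂ :=
  (Real.Gamma (γ/2))⁻¹ •
    ∫ t in Ioi (0:ℝ), Complex.exp (-ζ * t) *
      ((t ^ (γ/2 - 1) * (4 * π * t) ^ (-(d:ℝ)/2) * (-(x i - y i)/(2 * t)) *
        Real.exp (-(dist x y) ^ 2 / (4 * t)) : ℝ) : ℂ)

lemma rpow_mul_exp_neg_le {u p : ℝ} (hu : 0 ≤ u) (hp : 0 < p) :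
    u ^ p * exp (-u) ≤ (p / exp 1) ^ p := by
  have h := mul_exp_neg_le_exp_neg_one (u / p)
  calc u ^ p * exp (-u) = (p * ((u / p) * exp (-(u / p)))) ^ p := by
        rw [mul_rpow hp.le (by positivity), mul_rpow (by positivity) (exp_pos _).le,
          div_rpow hu hp.le, ← exp_mul]
        field_simp
    _ ≤ (p * exp (-1)) ^ p := by gcongr
    _ = (p / exp 1) ^ p := by rw [exp_neg, div_eq_mul_inv]

lemma rpow_neg_mul_exp_neg_div_le {p a s : ℝ} (hp : 0 < p) (ha : 0 < a) (hs : 0 < s) :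
    s ^ (-p) * exp (-(a / s)) ≤ (p / exp 1) ^ p * a ^ (-p) := by
  have hsp : s ^ (-p) = (a / s) ^ p * a ^ (-p) := by
    rw [div_rpow ha.le hs.le, rpow_neg ha.le, rpow_neg hs.le]
    field_simp
  calc s ^ (-p) * exp (-(a / s)) = (a / s) ^ p * exp (-(a / s)) * a ^ (-p) := by
        rw [hsp]; ring
    _ ≤ (p / exp 1) ^ p * a ^ (-p) := by
        gcongr
        exact rpow_mul_exp_neg_le (by positivity) hp

lemma sqrt_mul_exp_neg_mul_le {ε a : ℝ} (hε : 0 < ε) (ha : 0 ≤ a) :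
    √a * exp (-(ε * a)) ≤ 1 / √(2 * exp 1 * ε) := by
  have h := mul_exp_neg_le_exp_neg_one (2 * ε * a)
  rw [← pow_le_pow_iff_left₀ (by positivity) (by positivity) two_ne_zero, mul_pow, div_pow,
    sq_sqrt ha, sq_sqrt (by positivity), ← exp_nat_mul, one_pow, le_div_iff₀ (by positivity)]
  calc a * exp (2 * -(ε * a)) * (2 * exp 1 * ε) = 2 * ε * a * exp (-(2 * ε * a)) * exp 1 := by
        ring_nf
    _ ≤ exp (-1) * exp 1 := by gcongr
    _ = 1 := by rw [← exp_add]; simp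

lemma sqrt_pi_mul_rpow_div_sqrt_eq {d : ℝ} (hd : 1 < d) :
    √π * ((d / (d - 1)) ^ (d / 2) / √(2 * exp 1 * (d / (d - 1) - 1))) =
      √(π / (2 * exp 1)) * d ^ (d / 2) * (d - 1) ^ ((1 - d) / 2) := by
  have hd1 : 0 < d - 1 := sub_pos.2 hd
  have hκ1 : d / (d - 1) - 1 = (d - 1)⁻¹ := by field_simp; ring
  have hpow : (d - 1) ^ ((1 - d) / 2) = √(d - 1) / (d - 1) ^ (d / 2) := by
    rw [sqrt_eq_rpow, ← rpow_sub hd1]; congr 1; ring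
  rw [hκ1, div_rpow (by linarith) hd1.le, sqrt_mul (by positivity), sqrt_inv,
    sqrt_div' _ (by positivity), hpow]
  have : 0 < √(d - 1) := sqrt_pos.2 hd1
  field_simp

def heatIntegrand (d : ℕ) (γ lam r t : ℝ) : ℝ :=
  exp (-lam * t) * t ^ (γ / 2 - 1) * (4 * π * t) ^ (-(d : ℝ) / 2) * exp (-r ^ 2 / (4 * t))

lemma rKer_eq_integral_heatIntegrand (d : ℕ) (γ lam : ℝ) (x y : EuclideanSpace ℝ (Fin d)) :
    rKer d γ lam x y = (Gamma (γ / 2))⁻¹ * ∫ t in Ioi 0, heatIntegrand d γ lam (dist x y) t :=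
  rfl

lemma heatIntegrand_nonneg (d : ℕ) (γ lam r : ℝ) {t : ℝ} (ht : 0 < t) :
    0 ≤ heatIntegrand d γ lam r t := by
  unfold heatIntegrand; positivity

/-- `r > 0` keeps the integrand bounded as `t → 0`; `λ > 0` makes it decay exponentially. -/
lemma integrableOn_heatIntegrand {d : ℕ} {γ lam r : ℝ} (hγ : γ < d + 2) (hlam : 0 < lam)
    (hr : 0 < r) : IntegrableOn (heatIntegrand d γ lam r) (Ioi 0) := by
  set p : ℝ := (d + 2 - γ) / 2
  have hp : 0 < p := by simp only [p]; linarith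
  have ha : 0 < r ^ 2 / 4 := by positivity
  refine Integrable.mono' ((exp_neg_integrableOn_Ioi 0 hlam).const_mul
    ((4 * π) ^ (-(d : ℝ) / 2) * ((p / exp 1) ^ p * (r ^ 2 / 4) ^ (-p)))) ?_ ?_
  · refine ContinuousOn.aestronglyMeasurable ?_ measurableSet_Ioi
    unfold heatIntegrand
    fun_prop (disch := intro t ht; have : (0 : ℝ) < t := ht; positivity)
  · filter_upwards [ae_restrict_mem measurableSet_Ioi] with s (hs : 0 < s)
    rw [Real.norm_eq_abs, abs_of_nonneg (heatIntegrand_nonneg d γ lam r hs)]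
    have hsplit : heatIntegrand d γ lam r s =
        (4 * π) ^ (-(d : ℝ) / 2) * (s ^ (-p) * exp (-(r ^ 2 / 4 / s))) * exp (-lam * s) := by
      have hpow : s ^ (-p) = s ^ (γ / 2 - 1) * s ^ (-(d : ℝ) / 2) := by
        rw [← rpow_add hs]; congr 1; ring
      rw [heatIntegrand, mul_rpow (by positivity) hs.le, hpow, div_div, ← neg_div]
      ring
    rw [hsplit]
    gcongr (4 * π) ^ (-(d : ℝ) / 2) * ?_ * _
    exact rpow_neg_mul_exp_neg_div_le hp ha hs

lemma norm_gradKer_le (d : ℕ) (γ : ℝ) (ζ : ℂ) (x y : EuclideanSpace ℝ (Fin d)) (i : Fin d) :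
    ‖gradKer d γ ζ x y i‖ ≤ |(Gamma (γ / 2))⁻¹| * |x i - y i| *
      ∫ t in Ioi 0, heatIntegrand d γ ζ.re (dist x y) t / (2 * t) := by
  rw [gradKer, norm_smul, Real.norm_eq_abs, mul_assoc, ← integral_const_mul]
  gcongr
  refine (norm_integral_le_integral_norm _).trans_eq (setIntegral_congr_fun measurableSet_Ioi ?_)
  intro t (ht : 0 < t)
  dsimp only
  rw [norm_mul, Complex.norm_exp, Complex.norm_real, Real.norm_eq_abs, heatIntegrand]
  simp only [Complex.neg_re, Complex.mul_re, Complex.ofReal_re, Complex.ofReal_im, mul_zero,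
    sub_zero, abs_mul, abs_div, abs_neg, abs_of_pos (exp_pos _),
    abs_of_nonneg (rpow_nonneg ht.le _),
    abs_of_nonneg (rpow_nonneg (by positivity : 0 ≤ 4 * π * t) _),
    abs_of_pos (by positivity : 0 < 2 * t)]
  ring

lemma sqrt_sum_norm_sq_gradKer_le (d : ℕ) (γ : ℝ) (ζ : ℂ) (x y : EuclideanSpace ℝ (Fin d)) :
    √(∑ i, ‖gradKer d γ ζ x y i‖ ^ 2) ≤ |(Gamma (γ / 2))⁻¹| * dist x y *
      ∫ t in Ioi 0, heatIntegrand d γ ζ.re (dist x y) t / (2 * t) := by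
  set c := |(Gamma (γ / 2))⁻¹|
  set J := ∫ t in Ioi 0, heatIntegrand d γ ζ.re (dist x y) t / (2 * t)
  have hJ : 0 ≤ J := setIntegral_nonneg measurableSet_Ioi fun t (ht : 0 < t) =>
    div_nonneg (heatIntegrand_nonneg d γ _ _ ht) (by positivity)
  calc √(∑ i, ‖gradKer d γ ζ x y i‖ ^ 2) ≤ √(∑ i, (x i - y i) ^ 2 * (c * J) ^ 2) := by
        gcongr with i
        rw [← sq_abs (x i - y i), ← mul_pow]
        gcongr
        exact (norm_gradKer_le d γ ζ x y i).trans_eq (by ring)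
    _ = c * dist x y * J := by
        rw [← Finset.sum_mul, sqrt_mul (Finset.sum_nonneg fun i _ => sq_nonneg _),
          sqrt_sq (by positivity), EuclideanSpace.dist_eq]
        simp only [Real.dist_eq, sq_abs]
        ring

lemma mul_heatIntegrand_two_le (d : ℕ) (lam : ℝ) {κ r s : ℝ} (hκ : 1 < κ) (hr : 0 ≤ r)
    (hs : 0 < s) :
    r * κ⁻¹ * (heatIntegrand d 2 lam r (κ⁻¹ * s) / (2 * (κ⁻¹ * s))) ≤
      κ ^ ((d : ℝ) / 2) / √(2 * exp 1 * (κ - 1)) * heatIntegrand d 1 (lam / κ) r s := by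
  have hκ0 : 0 < κ := by linarith
  set a := r ^ 2 / (4 * s)
  set P := exp (-(lam / κ) * s) * (4 * π * s) ^ (-(d : ℝ) / 2) * exp (-a)
  have hr_eq : r = 2 * √s * √a := by
    have hsa : s * a = (r / 2) ^ 2 := by simp only [a]; field_simp; ring
    rw [mul_assoc, ← sqrt_mul hs.le, hsa, sqrt_sq (by positivity)]
    ring
  have h2 : heatIntegrand d 2 lam r (κ⁻¹ * s) = κ ^ ((d : ℝ) / 2) * P * exp (-((κ - 1) * a)) := by
    have hpow : (4 * π * (κ⁻¹ * s)) ^ (-(d : ℝ) / 2) =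
        κ ^ ((d : ℝ) / 2) * (4 * π * s) ^ (-(d : ℝ) / 2) := by
      rw [show 4 * π * (κ⁻¹ * s) = κ⁻¹ * (4 * π * s) by ring,
        mul_rpow (by positivity) (by positivity), inv_rpow hκ0.le, ← rpow_neg hκ0.le, neg_div,
        neg_neg]
    have hexp : exp (-r ^ 2 / (4 * (κ⁻¹ * s))) = exp (-a) * exp (-((κ - 1) * a)) := by
      rw [← exp_add]; congr 1; simp only [a]; field_simp; ring
    have hlin : -lam * (κ⁻¹ * s) = -(lam / κ) * s := by ring
    simp only [heatIntegrand, P, hpow, hexp, hlin]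
    norm_num
    ring
  have h1 : heatIntegrand d 1 (lam / κ) r s = (√s)⁻¹ * P := by
    simp only [heatIntegrand, P, a, sqrt_eq_rpow, ← rpow_neg hs.le, neg_div]
    norm_num
    ring
  have key := sqrt_mul_exp_neg_mul_le (sub_pos.2 hκ) (by positivity : 0 ≤ a)
  calc r * κ⁻¹ * (heatIntegrand d 2 lam r (κ⁻¹ * s) / (2 * (κ⁻¹ * s)))
      = κ ^ ((d : ℝ) / 2) * (√s)⁻¹ * P * (√a * exp (-((κ - 1) * a))) := by
        rw [h2, hr_eq]; field_simp; rw [sq_sqrt hs.le]; ring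
    _ ≤ κ ^ ((d : ℝ) / 2) * (√s)⁻¹ * P * (1 / √(2 * exp 1 * (κ - 1))) := by gcongr
    _ = _ := by rw [h1]; ring

lemma mul_integral_heatIntegrand_two_le (d : ℕ) {κ lam r : ℝ} (hκ : 1 < κ) (hlam : 0 < lam)
    (hr : 0 < r) :
    r * ∫ t in Ioi 0, heatIntegrand d 2 lam r t / (2 * t) ≤
      κ ^ ((d : ℝ) / 2) / √(2 * exp 1 * (κ - 1)) *
        ∫ s in Ioi 0, heatIntegrand d 1 (lam / κ) r s := by
  have hκ0 : 0 < κ := by linarith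
  have hsubst : r * ∫ t in Ioi 0, heatIntegrand d 2 lam r t / (2 * t) =
      ∫ s in Ioi 0, r * κ⁻¹ * (heatIntegrand d 2 lam r (κ⁻¹ * s) / (2 * (κ⁻¹ * s))) := by
    rw [integral_const_mul, integral_comp_mul_left_Ioi (fun t ↦ heatIntegrand d 2 lam r t / (2 * t))
      0 (inv_pos.2 hκ0), mul_zero, inv_inv, smul_eq_mul]
    field_simp
  rw [hsubst, ← integral_const_mul]
  refine integral_mono_of_nonneg ?_
    ((integrableOn_heatIntegrand ?_ (div_pos hlam hκ0) hr).const_mul _) ?_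
  · filter_upwards [ae_restrict_mem measurableSet_Ioi] with s (hs : 0 < s)
    have hs' : 0 < κ⁻¹ * s := by positivity
    exact mul_nonneg (by positivity)
      (div_nonneg (heatIntegrand_nonneg d 2 lam r hs') (by positivity))
  · linarith [(Nat.cast_nonneg d : (0 : ℝ) ≤ d)]
  · filter_upwards [ae_restrict_mem measurableSet_Ioi] with s (hs : 0 < s)
    exact mul_heatIntegrand_two_le d lam hκ hr.le hs

/-- pointwise bound `|∇ₓ (ζ-Δ)^(-1)(x,y)| ≤ m_d (κ_d⁻¹ Re ζ - Δ)^(-1/2)(x,y)`. -/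
theorem stmt2 (d : ℕ) (hd : 2 ≤ d) (md κd : ℝ)
    (hmd : md = Real.sqrt (π / (2 * Real.exp 1)) * (d:ℝ) ^ ((d:ℝ)/2)
        * ((d:ℝ) - 1) ^ (((1:ℝ) - (d:ℝ))/2))
    (hκd : κd = (d:ℝ)/((d:ℝ) - 1))
    (ζ : ℂ) (hζ : 0 < ζ.re) (x y : EuclideanSpace ℝ (Fin d)) (hxy : x ≠ y) :
    Real.sqrt (∑ i, ‖gradKer d 2 ζ x y i‖ ^ 2) ≤ md * rKer d 1 (ζ.re / κd) x y := by
  have hd1 : (1 : ℝ) < d := by exact_mod_cast hd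
  have hκ : 1 < κd := by rw [hκd, one_lt_div (by linarith)]; linarith
  calc √(∑ i, ‖gradKer d 2 ζ x y i‖ ^ 2)
      ≤ dist x y * ∫ t in Ioi 0, heatIntegrand d 2 ζ.re (dist x y) t / (2 * t) := by
        simpa using sqrt_sum_norm_sq_gradKer_le d 2 ζ x y
    _ ≤ κd ^ ((d : ℝ) / 2) / √(2 * exp 1 * (κd - 1)) *
          ∫ s in Ioi 0, heatIntegrand d 1 (ζ.re / κd) (dist x y) s :=
        mul_integral_heatIntegrand_two_le d hκ hζ (dist_pos.2 hxy)
    _ = md * rKer d 1 (ζ.re / κd) x y := by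
        rw [rKer_eq_integral_heatIntegrand, hmd, ← sqrt_pi_mul_rpow_div_sqrt_eq hd1, ← hκd]
        norm_num [Gamma_one_half_eq]
        field_simp
end
end

section
/- For every ζ ∈ ℂ with Re ζ > 0 and all x ≠ y in ℝ^d, |(ζ-Δ)^(-1/2)(x,y)| ≤ 2^(d/4+1/4)·(2^(-1)·|ζ| - Δ)^(-1/2)(x,y). -/
noncomputable section
open Real Set MeasureTheory

/-!
With `b = |x - y|² / 4` and `p = -(d + 1) / 2`, both kernels are multiples of the Bessel integral
`F(z) = ∫₀^∞ e^{-zt} t^p e^{-b/t} dt`. Write `ζ = w²` with `|arg w| < π/4`. The substitution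
`t = u / w` gives `F(w²) w^{p+1} = ∫₀^∞ e^{-w(u + b/u)} u^p du`: for real `w` by a change of
variables, on the whole sector by analytic continuation. As `u + b/u > 0`, the modulus of the
right side can only grow when `w` is replaced by a real `0 < c ≤ re w`; for `c = |w|/√2` undoing
the substitution gives `|F(ζ)| ≤ 2^{(d-1)/4} F(|ζ|/2)`.
-/

open Filter Topology

section LaplaceIntegral

variable {α : Type*} [MeasurableSpace α]

def laplaceIntegral (μ : Measure α) (φ g : α → ℝ) (z : ℂ) : ℂ :=
  ∫ a, Complex.exp (-z * φ a) * g a ∂μ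

lemma norm_cexp_neg_mul_ofReal (z : ℂ) (s : ℝ) :
    ‖Complex.exp (-z * s)‖ = Real.exp (-(z.re * s)) := by
  simp [Complex.norm_exp]

lemma mul_exp_neg_mul_le {c : ℝ} (hc : 0 < c) (s : ℝ) : s * Real.exp (-(c * s)) ≤ 1 / c := by
  rw [le_div_iff₀ hc]
  calc s * Real.exp (-(c * s)) * c = c * s * Real.exp (-(c * s)) := by ring
    _ ≤ Real.exp (-1) := Real.mul_exp_neg_le_exp_neg_one _
    _ ≤ 1 := Real.exp_le_one_iff.mpr (by norm_num)

/-- Differentiation under the integral sign: on `re z ≥ δ` the `z`-derivative `-φ e^{-zφ} g` is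
dominated by `(2/δ) e^{-δφ/2} |g|`. -/
theorem differentiableOn_laplaceIntegral {μ : Measure α} {φ g : α → ℝ}
    (hφ : ∀ᵐ a ∂μ, 0 ≤ φ a) (hφm : AEStronglyMeasurable φ μ) (hgm : AEStronglyMeasurable g μ)
    (hint : ∀ c > 0, Integrable (fun a => Real.exp (-(c * φ a)) * g a) μ) :
    DifferentiableOn ℂ (laplaceIntegral μ φ g) {z | 0 < z.re} := by
  intro z₀ (hz₀ : 0 < z₀.re)
  set δ := z₀.re / 2 with hδdef
  have hδ : 0 < δ := by positivity
  have hφm' : AEStronglyMeasurable (fun a => (φ a : ℂ)) μ :=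
    Complex.continuous_ofReal.comp_aestronglyMeasurable hφm
  have hgm' : AEStronglyMeasurable (fun a => (g a : ℂ)) μ :=
    Complex.continuous_ofReal.comp_aestronglyMeasurable hgm
  have hmeas : ∀ z : ℂ, AEStronglyMeasurable (fun a => Complex.exp (-z * φ a) * g a) μ :=
    fun z => (Complex.continuous_exp.comp_aestronglyMeasurable (hφm'.const_mul (-z))).mul hgm'
  have hnorm : ∀ (z : ℂ) a,
      ‖Complex.exp (-z * φ a) * g a‖ = ‖Real.exp (-(z.re * φ a)) * g a‖ := fun z a => by
    rw [norm_mul, norm_mul, norm_cexp_neg_mul_ofReal, Complex.norm_real,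
      Real.norm_of_nonneg (Real.exp_pos _).le]
  have hre : ∀ z ∈ Metric.ball z₀ δ, δ ≤ z.re := fun z hz => by
    have := (Complex.abs_re_le_norm (z - z₀)).trans (mem_ball_iff_norm.mp hz).le
    rw [Complex.sub_re, abs_le] at this
    linarith [hδdef]
  refine (hasDerivAt_integral_of_dominated_loc_of_deriv_le
    (F' := fun z a => Complex.exp (-z * φ a) * (-φ a) * g a)
    (bound := fun a => 2 / δ * ‖Real.exp (-(δ / 2 * φ a)) * g a‖)
    (Metric.ball_mem_nhds z₀ hδ) (Eventually.of_forall hmeas) ?_ ?_ ?_ ?_ ?_).2.differentiableAt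
    |>.differentiableWithinAt
  · exact (hint _ hz₀).norm.mono' (hmeas z₀) (Eventually.of_forall fun a => (hnorm z₀ a).le)
  · exact ((Complex.continuous_exp.comp_aestronglyMeasurable (hφm'.const_mul (-z₀))).mul
      hφm'.neg).mul hgm'
  · filter_upwards [hφ] with a ha z hz
    have hsplit : Real.exp (-(δ * φ a))
        = Real.exp (-(δ / 2 * φ a)) * Real.exp (-(δ / 2 * φ a)) := by
      rw [← Real.exp_add]; ring_nf
    calc ‖Complex.exp (-z * φ a) * (-φ a) * g a‖
        = φ a * Real.exp (-(z.re * φ a)) * ‖g a‖ := by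
          simp only [norm_mul, norm_cexp_neg_mul_ofReal, norm_neg, Complex.norm_real,
            Real.norm_of_nonneg ha]; ring
      _ ≤ φ a * Real.exp (-(δ * φ a)) * ‖g a‖ := by
          gcongr
          exact hre z hz
      _ = φ a * Real.exp (-(δ / 2 * φ a)) * (Real.exp (-(δ / 2 * φ a)) * ‖g a‖) := by
          rw [hsplit]; ring
      _ ≤ 2 / δ * ‖Real.exp (-(δ / 2 * φ a)) * g a‖ := by
          rw [norm_mul, Real.norm_of_nonneg (Real.exp_pos _).le]
          gcongr
          simpa using mul_exp_neg_mul_le (half_pos hδ) (φ a)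
  · exact (hint _ (half_pos hδ)).norm.const_mul _
  · refine Eventually.of_forall fun a z _ => ?_
    simpa using (((hasDerivAt_id z).neg.mul_const (φ a : ℂ)).cexp).mul_const (g a : ℂ)

theorem norm_laplaceIntegral_le_of_le_re {μ : Measure α} {φ g : α → ℝ}
    (hφ : ∀ᵐ a ∂μ, 0 ≤ φ a) (hg : ∀ᵐ a ∂μ, 0 ≤ g a) {c : ℝ}
    (hint : Integrable (fun a => Real.exp (-(c * φ a)) * g a) μ) {z : ℂ} (hcz : c ≤ z.re) :
    ‖laplaceIntegral μ φ g z‖ ≤ ‖laplaceIntegral μ φ g c‖ := by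
  have hreal : laplaceIntegral μ φ g c = ((∫ a, Real.exp (-(c * φ a)) * g a ∂μ : ℝ) : ℂ) := by
    rw [laplaceIntegral, ← integral_complex_ofReal]
    congr 1 with a
    push_cast; ring_nf
  rw [hreal, Complex.norm_real]
  refine (norm_integral_le_integral_norm _).trans ?_
  refine le_trans ?_ (le_abs_self _)
  refine integral_mono_of_nonneg (Eventually.of_forall fun _ => norm_nonneg _) hint ?_
  filter_upwards [hφ, hg] with a ha hga
  rw [norm_mul, norm_cexp_neg_mul_ofReal, Complex.norm_real, Real.norm_of_nonneg hga]
  gcongr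

end LaplaceIntegral

lemma rpow_mul_exp_neg_le_s4 {q x : ℝ} (hq : 0 ≤ q) (hx : 0 ≤ x) :
    x ^ q * Real.exp (-x) ≤ (q / Real.exp 1) ^ q := by
  rcases hq.eq_or_lt with rfl | hq
  · simpa using hx
  have hy : 0 ≤ x / q := div_nonneg hx hq.le
  calc x ^ q * Real.exp (-x) = q ^ q * (x / q * Real.exp (-(x / q))) ^ q := by
        rw [Real.mul_rpow hy (Real.exp_pos _).le, ← Real.exp_mul, Real.div_rpow hx hq.le,
          neg_mul, div_mul_cancel₀ _ hq.ne']
        field_simp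
    _ ≤ q ^ q * Real.exp (-1) ^ q := by
        gcongr
        exact Real.mul_exp_neg_le_exp_neg_one _
    _ = (q / Real.exp 1) ^ q := by
        rw [← Real.mul_rpow hq.le (Real.exp_pos _).le, Real.exp_neg, div_eq_mul_inv]

lemma rpow_mul_exp_neg_div_le {p b t : ℝ} (hp : p ≤ 0) (hb : 0 < b) (ht : 0 < t) :
    t ^ p * Real.exp (-(b / t)) ≤ b ^ p * (-p / Real.exp 1) ^ (-p) := by
  calc t ^ p * Real.exp (-(b / t)) = b ^ p * ((b / t) ^ (-p) * Real.exp (-(b / t))) := by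
        rw [Real.div_rpow hb.le ht.le, Real.rpow_neg hb.le, Real.rpow_neg ht.le]
        field_simp
    _ ≤ b ^ p * (-p / Real.exp 1) ^ (-p) := by
        gcongr
        exact rpow_mul_exp_neg_le_s4 (neg_nonneg.mpr hp) (by positivity)

lemma integrableOn_exp_neg_mul_mul_rpow_mul_exp_neg_div {p c b : ℝ} (hp : p ≤ 0) (hc : 0 < c)
    (hb : 0 < b) :
    IntegrableOn (fun t => Real.exp (-(c * t)) * (t ^ p * Real.exp (-(b / t)))) (Ioi 0) := by
  refine ((exp_neg_integrableOn_Ioi 0 hc).mul_const (b ^ p * (-p / Real.exp 1) ^ (-p))).mono'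
    (by fun_prop)
    ((ae_restrict_iff' measurableSet_Ioi).mpr (Eventually.of_forall fun t (ht : 0 < t) => ?_))
  rw [norm_mul, Real.norm_of_nonneg (Real.exp_pos _).le, neg_mul,
    Real.norm_of_nonneg (by positivity)]
  exact mul_le_mul_of_nonneg_left (rpow_mul_exp_neg_div_le hp hb ht) (Real.exp_pos _).le

/-- `∫₀^∞ e^{-zt} t^p e^{-b/t} dt = 2 (b/z)^{(p+1)/2} K_{p+1}(2√(bz))`, with `K` the Macdonald
function. -/
def besselIntegral (p b : ℝ) : ℂ → ℂ :=
  laplaceIntegral (volume.restrict (Ioi 0)) (fun t => t) (fun t => t ^ p * Real.exp (-(b / t)))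

def besselIntegralSym (p b : ℝ) : ℂ → ℂ :=
  laplaceIntegral (volume.restrict (Ioi 0)) (fun u => u + b / u) (fun u => u ^ p)

lemma exp_neg_mul_add_div_mul_rpow (p b c u : ℝ) :
    Real.exp (-(c * (u + b / u))) * u ^ p
      = Real.exp (-(c * u)) * (u ^ p * Real.exp (-(c * b / u))) := by
  rw [show -(c * (u + b / u)) = -(c * u) + -(c * b / u) by ring, Real.exp_add]
  ring

lemma integrableOn_exp_neg_mul_add_div_mul_rpow {p c b : ℝ} (hp : p ≤ 0) (hc : 0 < c)
    (hb : 0 < b) :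
    IntegrableOn (fun u => Real.exp (-(c * (u + b / u))) * u ^ p) (Ioi 0) := by
  simpa only [exp_neg_mul_add_div_mul_rpow] using
    integrableOn_exp_neg_mul_mul_rpow_mul_exp_neg_div hp hc (mul_pos hc hb)

lemma differentiableOn_besselIntegral {p b : ℝ} (hp : p ≤ 0) (hb : 0 < b) :
    DifferentiableOn ℂ (besselIntegral p b) {z | 0 < z.re} :=
  differentiableOn_laplaceIntegral
    (ae_restrict_of_forall_mem measurableSet_Ioi fun _ ht => le_of_lt ht)
    (by fun_prop) (by fun_prop)
    fun _ hc => integrableOn_exp_neg_mul_mul_rpow_mul_exp_neg_div hp hc hb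

lemma differentiableOn_besselIntegralSym {p b : ℝ} (hp : p ≤ 0) (hb : 0 < b) :
    DifferentiableOn ℂ (besselIntegralSym p b) {z | 0 < z.re} :=
  differentiableOn_laplaceIntegral
    (ae_restrict_of_forall_mem measurableSet_Ioi fun u (hu : 0 < u) => by positivity)
    (by fun_prop) (by fun_prop) fun _ hc => integrableOn_exp_neg_mul_add_div_mul_rpow hp hc hb

lemma besselIntegralSym_ofReal (p b : ℝ) {c : ℝ} (hc : 0 < c) :
    besselIntegralSym p b c = ((c ^ (p + 1) : ℝ) : ℂ) * besselIntegral p b ((c ^ 2 : ℝ) : ℂ) := by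
  have hsub := integral_comp_mul_left_Ioi
    (fun u : ℝ => Complex.exp (-(c : ℂ) * ((u + b / u : ℝ) : ℂ)) * ((u ^ p : ℝ) : ℂ)) 0 hc
  have hscale : ∀ t ∈ Ioi (0 : ℝ),
      Complex.exp (-(c : ℂ) * ((c * t + b / (c * t) : ℝ) : ℂ)) * (((c * t) ^ p : ℝ) : ℂ)
        = ((c ^ p : ℝ) : ℂ) *
          (Complex.exp (-((c ^ 2 : ℝ) : ℂ) * t) * ((t ^ p * Real.exp (-(b / t)) : ℝ) : ℂ)) := by
    intro t (ht : 0 < t)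
    have hc' : (c : ℂ) ≠ 0 := Complex.ofReal_ne_zero.mpr hc.ne'
    have ht' : (t : ℂ) ≠ 0 := Complex.ofReal_ne_zero.mpr ht.ne'
    have hexp : -(c : ℂ) * ((c * t + b / (c * t) : ℝ) : ℂ)
        = -((c ^ 2 : ℝ) : ℂ) * t + ((-(b / t) : ℝ) : ℂ) := by
      push_cast
      field_simp
      ring
    rw [hexp, Complex.exp_add, ← Complex.ofReal_exp, Real.mul_rpow hc.le ht.le]
    push_cast
    ring
  rw [mul_zero, setIntegral_congr_fun measurableSet_Ioi hscale, integral_const_mul] at hsub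
  simp only [besselIntegralSym, besselIntegral, laplaceIntegral]
  rw [Real.rpow_add hc, Real.rpow_one, Complex.ofReal_mul, mul_comm _ (c : ℂ), mul_assoc, hsub,
    Complex.real_smul, ← mul_assoc, ← Complex.ofReal_mul, mul_inv_cancel₀ hc.ne',
    Complex.ofReal_one, one_mul]

lemma convex_sector : Convex ℝ {v : ℂ | |v.im| < v.re} := by
  have hS : {v : ℂ | |v.im| < v.re}
      = {v | (Complex.imLm - Complex.reLm) v < 0} ∩ {v | (-Complex.imLm - Complex.reLm) v < 0} := by
    ext v
    simp only [mem_ofPred_eq, mem_inter_iff, LinearMap.sub_apply, LinearMap.neg_apply,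
      Complex.imLm_coe, Complex.reLm_coe, abs_lt]
    constructor <;> rintro ⟨h₁, h₂⟩ <;> constructor <;> linarith
  rw [hS]
  exact (convex_halfSpace_lt (LinearMap.isLinear _) 0).inter
    (convex_halfSpace_lt (LinearMap.isLinear _) 0)

theorem besselIntegral_sq_mul_cpow {p b : ℝ} (hp : p ≤ 0) (hb : 0 < b) {w : ℂ}
    (hw : |w.im| < w.re) :
    besselIntegral p b (w ^ 2) * w ^ ((p : ℂ) + 1) = besselIntegralSym p b w := by
  set S := {v : ℂ | |v.im| < v.re}
  have hS : IsOpen S := isOpen_lt (by fun_prop) Complex.continuous_re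
  have hre : ∀ v ∈ S, 0 < v.re := fun v hv => (abs_nonneg _).trans_lt hv
  have hsq_re : ∀ v ∈ S, 0 < (v ^ 2).re := fun v (hv : |v.im| < v.re) => by
    rw [sq, Complex.mul_re]
    nlinarith [abs_nonneg v.im, sq_abs v.im]
  have hf : AnalyticOnNhd ℂ (fun v => besselIntegral p b (v ^ 2) * v ^ ((p : ℂ) + 1)) S :=
    (((differentiableOn_besselIntegral hp hb).comp (differentiable_pow 2).differentiableOn
      hsq_re).mul fun v hv => (differentiableAt_id.cpow (differentiableAt_const _)
        (Or.inl (hre v hv))).differentiableWithinAt).analyticOnNhd hS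
  have hg : AnalyticOnNhd ℂ (besselIntegralSym p b) S :=
    ((differentiableOn_besselIntegralSym hp hb).mono hre).analyticOnNhd hS
  have hofReal : Tendsto ((↑) : ℝ → ℂ) (𝓝[≠] 1) (𝓝[≠] 1) :=
    tendsto_nhdsWithin_of_tendsto_nhds_of_eventually_within _
      ((Complex.continuous_ofReal.tendsto' 1 1 Complex.ofReal_one).mono_left nhdsWithin_le_nhds)
      (eventually_nhdsWithin_of_forall fun c hc => by simpa using hc)
  have hreal : ∃ᶠ v in 𝓝[≠] (1 : ℂ),
      besselIntegral p b (v ^ 2) * v ^ ((p : ℂ) + 1) = besselIntegralSym p b v := by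
    refine hofReal.frequently (Eventually.frequently ?_)
    filter_upwards [nhdsWithin_le_nhds (lt_mem_nhds one_pos)] with c hc
    rw [besselIntegralSym_ofReal p b hc, Complex.ofReal_cpow hc.le]
    push_cast
    ring
  exact hf.eqOn_of_preconnected_of_frequently_eq hg convex_sector.isPreconnected
    (by simp [S]) hreal hw

lemma norm_besselIntegral_sq_le {p b : ℝ} (hp : p ≤ 0) (hb : 0 < b) {w : ℂ}
    (hw : |w.im| < w.re) :
    ‖besselIntegral p b (w ^ 2)‖
      ≤ 2 ^ (-(p + 1) / 2) * ‖besselIntegral p b ((‖w‖ ^ 2 / 2 : ℝ) : ℂ)‖ := by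
  have hw0 : 0 < ‖w‖ := norm_pos_iff.mpr (by rintro rfl; simp at hw)
  set c := 2 ^ (-(1 / 2) : ℝ) * ‖w‖
  have hc : 0 < c := by positivity
  have hc_sq : c ^ 2 = ‖w‖ ^ 2 / 2 := by
    rw [mul_pow, ← Real.rpow_natCast, ← Real.rpow_mul zero_le_two]
    norm_num
    ring
  have hc_re : c ≤ w.re := by
    refine abs_le_of_sq_le_sq' ?_ ((abs_nonneg _).trans hw.le) |>.2
    rw [hc_sq, ← Complex.normSq_eq_norm_sq, Complex.normSq_apply]
    nlinarith [sq_abs w.im, abs_nonneg w.im]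
  have hc_rpow : c ^ (p + 1) = 2 ^ (-(p + 1) / 2) * ‖w‖ ^ (p + 1) := by
    rw [Real.mul_rpow (by positivity) hw0.le, ← Real.rpow_mul zero_le_two]
    ring_nf
  have hnorm_cpow : ‖w ^ ((p : ℂ) + 1)‖ = ‖w‖ ^ (p + 1) := by
    simpa using Complex.norm_cpow_of_ne_zero (norm_pos_iff.mp hw0) ((p : ℂ) + 1)
  have key : ‖besselIntegral p b (w ^ 2)‖ * ‖w‖ ^ (p + 1)
      ≤ 2 ^ (-(p + 1) / 2) * ‖besselIntegral p b ((‖w‖ ^ 2 / 2 : ℝ) : ℂ)‖ * ‖w‖ ^ (p + 1) :=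
    calc ‖besselIntegral p b (w ^ 2)‖ * ‖w‖ ^ (p + 1) = ‖besselIntegralSym p b w‖ := by
          rw [← besselIntegral_sq_mul_cpow hp hb hw, norm_mul, hnorm_cpow]
      _ ≤ ‖besselIntegralSym p b c‖ :=
          norm_laplaceIntegral_le_of_le_re
            (ae_restrict_of_forall_mem measurableSet_Ioi fun u (hu : 0 < u) => by positivity)
            (ae_restrict_of_forall_mem measurableSet_Ioi fun u (hu : 0 < u) => by positivity)
            (integrableOn_exp_neg_mul_add_div_mul_rpow hp hc hb) hc_re
      _ = _ := by
          rw [besselIntegralSym_ofReal p b hc, norm_mul, Complex.norm_real,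
            Real.norm_of_nonneg (by positivity), hc_rpow, hc_sq]
          ring
  exact le_of_mul_le_mul_right key (by positivity)

lemma exists_sq_eq_of_re_pos {ζ : ℂ} (hζ : 0 < ζ.re) : ∃ w : ℂ, w ^ 2 = ζ ∧ |w.im| < w.re := by
  obtain ⟨w, hw⟩ := IsAlgClosed.exists_pow_nat_eq ζ two_pos
  have him : w.im ^ 2 < w.re ^ 2 := by
    have := congrArg Complex.re hw
    rw [sq w, Complex.mul_re] at this
    nlinarith
  rcases le_or_gt 0 w.re with h | h
  · exact ⟨w, hw, abs_lt_of_sq_lt_sq him h⟩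
  · refine ⟨-w, by rw [neg_sq, hw], ?_⟩
    simpa using abs_lt_of_sq_lt_sq (by simpa using him) (by linarith : 0 ≤ -w.re)

theorem norm_besselIntegral_le {p b : ℝ} (hp : p ≤ 0) (hb : 0 < b) {ζ : ℂ} (hζ : 0 < ζ.re) :
    ‖besselIntegral p b ζ‖ ≤ 2 ^ (-(p + 1) / 2) * ‖besselIntegral p b ((‖ζ‖ / 2 : ℝ) : ℂ)‖ := by
  obtain ⟨w, rfl, hw⟩ := exists_sq_eq_of_re_pos hζ
  simpa [norm_pow] using norm_besselIntegral_sq_le hp hb hw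

lemma cKer_eq_smul_besselIntegral (d : ℕ) (γ : ℝ) (ζ : ℂ) (x y : EuclideanSpace ℝ (Fin d)) :
    cKer d γ ζ x y = ((Real.Gamma (γ / 2))⁻¹ * (4 * π) ^ (-(d : ℝ) / 2)) •
      besselIntegral (γ / 2 - 1 - d / 2) (dist x y ^ 2 / 4) ζ := by
  rw [cKer, mul_smul, besselIntegral, laplaceIntegral,
    ← integral_smul ((4 * π) ^ (-(d : ℝ) / 2) : ℝ)]
  congr 1
  refine setIntegral_congr_fun measurableSet_Ioi fun t (ht : 0 < t) => ?_
  have hpow : t ^ (γ / 2 - 1) * (4 * π * t) ^ (-(d : ℝ) / 2)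
      = (4 * π) ^ (-(d : ℝ) / 2) * t ^ (γ / 2 - 1 - d / 2) := by
    rw [Real.mul_rpow (by positivity) ht.le, sub_eq_add_neg (γ / 2 - 1), Real.rpow_add ht,
      neg_div]
    ring
  rw [hpow, Complex.real_smul]
  push_cast
  ring_nf

lemma ofReal_rKer (d : ℕ) (γ lam : ℝ) (x y : EuclideanSpace ℝ (Fin d)) :
    (rKer d γ lam x y : ℂ) = cKer d γ lam x y := by
  rw [rKer, cKer, Complex.ofReal_mul, ← integral_complex_ofReal, Complex.real_smul]
  congr 2 with t
  push_cast
  ring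

lemma rKer_nonneg (d : ℕ) {γ : ℝ} (hγ : 0 < γ) (lam : ℝ) (x y : EuclideanSpace ℝ (Fin d)) :
    0 ≤ rKer d γ lam x y :=
  mul_nonneg (inv_nonneg.mpr (Real.Gamma_pos_of_pos (half_pos hγ)).le)
    (setIntegral_nonneg measurableSet_Ioi fun t (ht : 0 < t) => by positivity)

theorem norm_cKer_le {d : ℕ} {γ : ℝ} (hγ : γ ≤ d + 2) {ζ : ℂ} (hζ : 0 < ζ.re)
    {x y : EuclideanSpace ℝ (Fin d)} (hxy : x ≠ y) :
    ‖cKer d γ ζ x y‖ ≤ 2 ^ ((d - γ) / 4) * ‖cKer d γ ((‖ζ‖ / 2 : ℝ) : ℂ) x y‖ := by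
  have hb : 0 < dist x y ^ 2 / 4 := by
    have := dist_pos.mpr hxy
    positivity
  have hbessel := norm_besselIntegral_le (p := γ / 2 - 1 - d / 2) (by linarith) hb hζ
  rw [show -(γ / 2 - 1 - d / 2 + 1) / 2 = (d - γ) / 4 by ring] at hbessel
  rw [cKer_eq_smul_besselIntegral, cKer_eq_smul_besselIntegral, norm_smul, norm_smul]
  calc _ ≤ _ := mul_le_mul_of_nonneg_left hbessel (norm_nonneg _)
    _ = _ := by ring

theorem stmt4_general (d : ℕ)
    (ζ : ℂ) (hζ : 0 < ζ.re) (x y : EuclideanSpace ℝ (Fin d)) (hxy : x ≠ y) :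
    ‖cKer d 1 ζ x y‖ ≤ 2 ^ ((d:ℝ)/4 + 1/4) * rKer d 1 (‖ζ‖ / 2) x y := by
  have hrKer : rKer d 1 (‖ζ‖ / 2) x y = ‖cKer d 1 ((‖ζ‖ / 2 : ℝ) : ℂ) x y‖ := by
    rw [← ofReal_rKer, Complex.norm_real, Real.norm_of_nonneg (rKer_nonneg d one_pos _ x y)]
  rw [hrKer]
  calc ‖cKer d 1 ζ x y‖ ≤ 2 ^ (((d : ℝ) - 1) / 4) * ‖cKer d 1 ((‖ζ‖ / 2 : ℝ) : ℂ) x y‖ :=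
        norm_cKer_le (by linarith) hζ hxy
    _ ≤ _ := by
        gcongr
        exacts [one_le_two, by linarith]

/-- `|(ζ-Δ)^(-1/2)(x,y)| ≤ 2^(d/4+1/4) (2⁻¹|ζ| - Δ)^(-1/2)(x,y)` for `Re ζ > 0`. -/
theorem stmt4 (d : ℕ) (hd : 2 ≤ d)
    (ζ : ℂ) (hζ : 0 < ζ.re) (x y : EuclideanSpace ℝ (Fin d)) (hxy : x ≠ y) :
    ‖cKer d 1 ζ x y‖ ≤ 2 ^ ((d:ℝ)/4 + 1/4) * rKer d 1 (‖ζ‖ / 2) x y :=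
  stmt4_general d ζ hζ x y hxy
end
end
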